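/- Holomorphic Jacobi identity for the Kähler–Poisson tensor: for all indices l, n, m ∈ {1,…,n} one has on U: Σ_k g^{l̄k} (∂_k g^{n̄m}) = Σ_k g^{n̄k} (∂_k g^{l̄m}) (first identity of equation (E:jac) of the paper). -/

import Mathlib

open scoped BigOperators

noncomputable section

/-- The `k`-th standard basis vector of `ℂⁿ`. -/
def ebasis (n : ℕ) (k : Fin n) : Fin n → ℂ := Pi.single k 1

/-- The holomorphic Wirtinger derivative `∂ₖ f`, computed via the real Fréchet derivative:
`∂ₖ f (z) = (1/2) (Df(z)(eₖ) - i · Df(z)(i·eₖ))`. -/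
def wdP (n : ℕ) (k : Fin n) (f : (Fin n → ℂ) → ℂ) : (Fin n → ℂ) → ℂ :=
  fun z => (1 / 2 : ℂ) *
    (fderiv ℝ f z (ebasis n k) - Complex.I * fderiv ℝ f z (Complex.I • ebasis n k))

/-- The antiholomorphic Wirtinger derivative `∂̄ₖ f`:
`∂̄ₖ f (z) = (1/2) (Df(z)(eₖ) + i · Df(z)(i·eₖ))`. -/
def wdB (n : ℕ) (k : Fin n) (f : (Fin n → ℂ) → ℂ) : (Fin n → ℂ) → ℂ :=
  fun z => (1 / 2 : ℂ) *
    (fderiv ℝ f z (ebasis n k) + Complex.I * fderiv ℝ f z (Complex.I • ebasis n k))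

/-- The Kähler potential viewed as a complex valued function. -/
def Phic (n : ℕ) (Φ : (Fin n → ℂ) → ℝ) : (Fin n → ℂ) → ℂ := fun z => (Φ z : ℂ)

/-- The metric `g_{k l̄} = ∂_k ∂̄_l Φ`. -/
def gdn (n : ℕ) (Φ : (Fin n → ℂ) → ℝ) (k l : Fin n) : (Fin n → ℂ) → ℂ :=
  wdP n k (wdB n l (Phic n Φ))

/-- `g_{k p t̄} = ∂_k ∂_p ∂̄_t Φ`. -/
def g3h (n : ℕ) (Φ : (Fin n → ℂ) → ℝ) (k p t : Fin n) : (Fin n → ℂ) → ℂ :=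
  wdP n k (wdP n p (wdB n t (Phic n Φ)))

/-- `g_{s q̄ l̄} = ∂_s ∂̄_q ∂̄_l Φ`. -/
def g3a (n : ℕ) (Φ : (Fin n → ℂ) → ℝ) (s q l : Fin n) : (Fin n → ℂ) → ℂ :=
  wdP n s (wdB n q (wdB n l (Phic n Φ)))

/-- `g_{a b̄ k l̄} = ∂_a ∂_k ∂̄_b ∂̄_l Φ`. -/
def g4 (n : ℕ) (Φ : (Fin n → ℂ) → ℝ) (a b k l : Fin n) : (Fin n → ℂ) → ℂ :=
  wdP n a (wdP n k (wdB n b (wdB n l (Phic n Φ))))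

section helpers
variable {n : ℕ} {U : Set (Fin n → ℂ)} {f g : (Fin n → ℂ) → ℂ} {z : Fin n → ℂ}

private lemma diffAt (hU : IsOpen U) (hf : ContDiffOn ℝ (⊤ : ℕ∞) f U) (hz : z ∈ U) :
    DifferentiableAt ℝ f z :=
  (hf.contDiffAt (hU.mem_nhds hz)).differentiableAt (by simp)

private lemma fderiv_apply_contDiffOn (hU : IsOpen U) (hf : ContDiffOn ℝ (⊤ : ℕ∞) f U)
    (v : Fin n → ℂ) : ContDiffOn ℝ (⊤ : ℕ∞) (fun z => fderiv ℝ f z v) U :=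
  (ContinuousLinearMap.apply ℝ ℂ v).contDiff.comp_contDiffOn (hf.fderiv_of_isOpen hU (by simp))

private lemma wdP_contDiffOn (hU : IsOpen U) (hf : ContDiffOn ℝ (⊤ : ℕ∞) f U) (k : Fin n) :
    ContDiffOn ℝ (⊤ : ℕ∞) (wdP n k f) U :=
  contDiffOn_const.mul ((fderiv_apply_contDiffOn hU hf _).sub
    (contDiffOn_const.mul (fderiv_apply_contDiffOn hU hf _)))

private lemma wdB_contDiffOn (hU : IsOpen U) (hf : ContDiffOn ℝ (⊤ : ℕ∞) f U) (k : Fin n) :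
    ContDiffOn ℝ (⊤ : ℕ∞) (wdB n k f) U :=
  contDiffOn_const.mul ((fderiv_apply_contDiffOn hU hf _).add
    (contDiffOn_const.mul (fderiv_apply_contDiffOn hU hf _)))

private lemma wdP_sum {ι : Type*} (s : Finset ι) (F : ι → (Fin n → ℂ) → ℂ)
    (hF : ∀ i ∈ s, DifferentiableAt ℝ (F i) z) (k : Fin n) :
    wdP n k (fun y => ∑ i ∈ s, F i y) z = ∑ i ∈ s, wdP n k (F i) z := by
  unfold wdP
  rw [fderiv_fun_sum hF]
  simp only [ContinuousLinearMap.coe_sum', Finset.sum_apply, Finset.mul_sum,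
    ← Finset.sum_sub_distrib]

private lemma wdP_mul (hf : DifferentiableAt ℝ f z) (hg : DifferentiableAt ℝ g z) (k : Fin n) :
    wdP n k (fun y => f y * g y) z = wdP n k f z * g z + f z * wdP n k g z := by
  unfold wdP
  rw [fderiv_fun_mul hf hg]
  simp only [ContinuousLinearMap.add_apply, ContinuousLinearMap.smul_apply, smul_eq_mul]
  ring

private lemma wdP_eq_of_eqOn (hU : IsOpen U) (hz : z ∈ U) (h : ∀ y ∈ U, f y = g y) (k : Fin n) :
    wdP n k f z = wdP n k g z := by
  have hev : f =ᶠ[nhds z] g := Filter.eventuallyEq_of_mem (hU.mem_nhds hz) h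
  unfold wdP
  rw [hev.fderiv_eq]

private lemma wdP_const (c : ℂ) (k : Fin n) : wdP n k (fun _ => c) z = 0 := by
  simp [wdP]

private lemma fderiv_fderiv_apply (hU : IsOpen U) (hf : ContDiffOn ℝ (⊤ : ℕ∞) f U) (hz : z ∈ U)
    (v w : Fin n → ℂ) :
    fderiv ℝ (fun y => fderiv ℝ f y w) z v = fderiv ℝ (fderiv ℝ f) z v w := by
  have hD : DifferentiableAt ℝ (fderiv ℝ f) z :=
    ((hf.fderiv_of_isOpen hU (m := 1) (by exact WithTop.coe_le_coe.mpr le_top)).contDiffAt (hU.mem_nhds hz)).differentiableAt (by simp)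
  rw [show (fun y => fderiv ℝ f y w) = (ContinuousLinearMap.apply ℝ ℂ w) ∘ (fderiv ℝ f) from rfl,
    fderiv_comp z (ContinuousLinearMap.apply ℝ ℂ w).differentiableAt hD]
  simp [ContinuousLinearMap.fderiv]

private lemma fderiv_wdP_apply (hU : IsOpen U) (hf : ContDiffOn ℝ (⊤ : ℕ∞) f U) (hz : z ∈ U)
    (p : Fin n) (v : Fin n → ℂ) :
    fderiv ℝ (wdP n p f) z v = (1 / 2 : ℂ) *
      (fderiv ℝ (fderiv ℝ f) z v (ebasis n p)
        - Complex.I * fderiv ℝ (fderiv ℝ f) z v (Complex.I • ebasis n p)) := by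
  have hder : ContDiffOn ℝ (⊤ : ℕ∞) (fderiv ℝ f) U := hf.fderiv_of_isOpen hU (by simp)
  have h1 : DifferentiableAt ℝ (fun y => fderiv ℝ f y (ebasis n p)) z :=
    diffAt hU (fderiv_apply_contDiffOn hU hf _) hz
  have h2 : DifferentiableAt ℝ (fun y => fderiv ℝ f y (Complex.I • ebasis n p)) z :=
    diffAt hU (fderiv_apply_contDiffOn hU hf _) hz
  have hw : HasFDerivAt (wdP n p f)
      ((1 / 2 : ℂ) • (fderiv ℝ (fun y => fderiv ℝ f y (ebasis n p)) z
        - Complex.I • fderiv ℝ (fun y => fderiv ℝ f y (Complex.I • ebasis n p)) z)) z := by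
    have h := ((h1.hasFDerivAt.sub (h2.hasFDerivAt.const_smul Complex.I)).const_smul
      ((1 / 2 : ℂ)))
    refine h.congr_of_eventuallyEq (Filter.Eventually.of_forall fun y => ?_)
    simp [wdP, smul_eq_mul]
  rw [hw.fderiv]
  simp only [ContinuousLinearMap.smul_apply, ContinuousLinearMap.sub_apply, smul_eq_mul]
  rw [fderiv_fderiv_apply hU hf hz, fderiv_fderiv_apply hU hf hz]

private lemma wdP_comm (hU : IsOpen U) (hf : ContDiffOn ℝ (⊤ : ℕ∞) f U) (hz : z ∈ U) (k p : Fin n) :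
    wdP n k (wdP n p f) z = wdP n p (wdP n k f) z := by
  have hs : ∀ v w, fderiv ℝ (fderiv ℝ f) z v w = fderiv ℝ (fderiv ℝ f) z w v :=
    (hf.contDiffAt (hU.mem_nhds hz)).isSymmSndFDerivAt (by rw [minSmoothness_of_isRCLikeNormedField]; exact WithTop.coe_le_coe.mpr (le_top : (2 : ℕ∞) ≤ ⊤))
  show (1 / 2 : ℂ) * _ = (1 / 2 : ℂ) * _
  rw [fderiv_wdP_apply hU hf hz, fderiv_wdP_apply hU hf hz,
    fderiv_wdP_apply hU hf hz, fderiv_wdP_apply hU hf hz,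
    hs (ebasis n k) (ebasis n p), hs (ebasis n k) (Complex.I • ebasis n p),
    hs (Complex.I • ebasis n k) (ebasis n p),
    hs (Complex.I • ebasis n k) (Complex.I • ebasis n p)]
  ring

end helpers

/-- holomorphic Jacobi identity:
`Σ_k g^{l̄k} (∂_k g^{n̄m}) = Σ_k g^{n̄k} (∂_k g^{l̄m})` on `U`. -/
theorem stmt_11 (n : ℕ) (hn : 1 ≤ n) (U : Set (Fin n → ℂ)) (hU : IsOpen U)
    (Φ : (Fin n → ℂ) → ℝ) (hΦ : ContDiffOn ℝ (⊤ : ℕ∞) Φ U)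
    (ginv : Fin n → Fin n → (Fin n → ℂ) → ℂ)
    (hginv : ∀ l k : Fin n, ContDiffOn ℝ (⊤ : ℕ∞) (ginv l k) U)
    (hinv1 : ∀ z ∈ U, ∀ l q : Fin n,
      (∑ k, ginv l k z * gdn n Φ k q z) = if l = q then 1 else 0)
    (hinv2 : ∀ z ∈ U, ∀ p k : Fin n,
      (∑ l, gdn n Φ p l z * ginv l k z) = if p = k then 1 else 0) :
    ∀ z ∈ U, ∀ l m' m : Fin n,
      (∑ k, ginv l k z * wdP n k (ginv m' m) z)
        = ∑ k, ginv m' k z * wdP n k (ginv l m) z := by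
  intro z hz l m' m
  have hPhic : ContDiffOn ℝ (⊤ : ℕ∞) (Phic n Φ) U :=
    Complex.ofRealCLM.contDiff.comp_contDiffOn hΦ
  have hG : ∀ p q : Fin n, ContDiffOn ℝ (⊤ : ℕ∞) (gdn n Φ p q) U := fun p q =>
    wdP_contDiffOn hU (wdB_contDiffOn hU hPhic q) p
  have hGd : ∀ p q : Fin n, DifferentiableAt ℝ (gdn n Φ p q) z := fun p q =>
    diffAt hU (hG p q) hz
  have hgid : ∀ a b : Fin n, DifferentiableAt ℝ (ginv a b) z := fun a b =>
    diffAt hU (hginv a b) hz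
  -- Step A: derivative of the inverse metric
  have stepA : ∀ s a b : Fin n, wdP n s (ginv a b) z
      = - ∑ p, ∑ q, ginv a p z * wdP n s (gdn n Φ p q) z * ginv q b z := by
    intro s a b
    have h0 : ∀ p : Fin n,
        wdP n s (fun y => ∑ q2, gdn n Φ p q2 y * ginv q2 b y) z = 0 := by
      intro p
      rw [wdP_eq_of_eqOn hU hz (g := fun _ => if p = b then (1 : ℂ) else 0)
        (fun y hy => hinv2 y hy p b) s]
      exact wdP_const _ s
    have h1 : ∀ p : Fin n,
        (∑ q2, (wdP n s (gdn n Φ p q2) z * ginv q2 b z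
          + gdn n Φ p q2 z * wdP n s (ginv q2 b) z)) = 0 := by
      intro p
      have := h0 p
      rw [wdP_sum Finset.univ (fun i y => gdn n Φ p i y * ginv i b y) (fun i _ => (hGd p i).mul (hgid i b)) s] at this
      rw [← this]
      exact Finset.sum_congr rfl fun i _ => (wdP_mul (hGd p i) (hgid i b) s).symm
    have h2 : ∑ p, ginv a p z * (∑ q2, (wdP n s (gdn n Φ p q2) z * ginv q2 b z
        + gdn n Φ p q2 z * wdP n s (ginv q2 b) z)) = 0 := by
      simp [h1]
    simp only [Finset.mul_sum, mul_add, Finset.sum_add_distrib] at h2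
    -- second double sum equals wdP n s (ginv a b) z
    have h3 : (∑ p, ∑ q2, ginv a p z * (gdn n Φ p q2 z * wdP n s (ginv q2 b) z))
        = wdP n s (ginv a b) z := by
      rw [Finset.sum_comm]
      have : ∀ q2 : Fin n, (∑ p, ginv a p z * (gdn n Φ p q2 z * wdP n s (ginv q2 b) z))
          = (if a = q2 then 1 else 0) * wdP n s (ginv q2 b) z := by
        intro q2
        rw [← hinv1 z hz a q2, Finset.sum_mul]
        exact Finset.sum_congr rfl fun p _ => by ring
      simp only [this, ite_mul, one_mul, zero_mul]
      simp
    rw [h3] at h2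
    have := eq_neg_of_add_eq_zero_right h2
    rw [this]
    congr 1
    exact Finset.sum_congr rfl fun p _ => Finset.sum_congr rfl fun q _ => by ring
  -- symmetry of the holomorphic derivative of the metric
  have hsymm : ∀ k p q : Fin n, wdP n k (gdn n Φ p q) z = wdP n p (gdn n Φ k q) z :=
    fun k p q => wdP_comm hU (wdB_contDiffOn hU hPhic q) hz k p
  -- key formula
  have key : ∀ a b : Fin n, (∑ k, ginv a k z * wdP n k (ginv b m) z)
      = - ∑ k, ∑ p, ∑ q, ginv a k z * (ginv b p z * wdP n k (gdn n Φ p q) z * ginv q m z) := by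
    intro a b
    rw [← Finset.sum_neg_distrib]
    refine Finset.sum_congr rfl fun k _ => ?_
    rw [stepA k b m]
    rw [mul_neg, Finset.mul_sum]
    congr 1
    refine Finset.sum_congr rfl fun p _ => ?_
    rw [Finset.mul_sum]
  rw [key l m', key m' l]
  congr 1
  rw [Finset.sum_comm]
  refine Finset.sum_congr rfl fun k _ => Finset.sum_congr rfl fun p _ =>
    Finset.sum_congr rfl fun q _ => ?_
  rw [hsymm p k q]
  ring
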